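/- Let q, a, b, c ∈ ℂ with 0 < |q| < 1, a ≠ 0, b ≠ 0, c ≠ 0, |c/(a b)| < 1, and 1 - c q^j ≠ 0 for all j ≥ 0, and let k ∈ ℕ. Then the k-th q-derivative with respect to c of the function c ↦ ∑_{n=0}^{∞} (a;q)_n (b;q)_n c^n / ((q;q)_n (c;q)_n (a b)^n) (the q-Gauss series ₂φ₁(a,b;c;q,c/(ab))) equals (1/(c;q)_k) · ∑_{i=0}^{k} [k choose i]_q ((a;q)_i (b;q)_i (c;q)_i / ((a b)^i (c q^k;q)_i)) · ∑_{n=0}^{∞} (a q^i;q)_n (b q^i;q)_n (q^{n+i};q)_{k-i} (c/(a b))^n / ((c q^{k+i};q)_n (q;q)_n). -/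

import Mathlib

/-- The finite q-shifted factorial (a;q)_n = ∏_{j=0}^{n-1} (1 - a q^j). -/
noncomputable def qPoch (q a : ℂ) (n : ℕ) : ℂ :=
  ∏ j ∈ Finset.range n, (1 - a * q ^ j)

/-- The q-binomial coefficient [n choose k]_q = (q;q)_n / ((q;q)_k (q;q)_{n-k}). -/
noncomputable def qBinom (q : ℂ) (n k : ℕ) : ℂ :=
  qPoch q q n / (qPoch q q k * qPoch q q (n - k))

/-- The q-differential operator: (D_q f)(c) = (f(c) - f(qc))/c. -/
noncomputable def Dq (q : ℂ) (f : ℂ → ℂ) : ℂ → ℂ :=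
  fun x => (f x - f (q * x)) / x

/-!
Write the summand as `A n * (t ^ n / (t;q)_n)` with `A n = (a;q)_n (b;q)_n / ((q;q)_n (a b)^n)`.
Since `D_q^k f (c)` only involves the values `f (q^j c)`, `j ≤ k`, the operator can be applied
term by term. Each term is expanded by the q-Leibniz rule
`D_q^k (f g)(t) = ∑ i, [k choose i]_q D_q^i f (t) D_q^(k-i) g (q^i t)` together with
`D_q^i t^(m+i) = (q^(m+1);q)_i t^m`, `D_q^i t^n = 0` for `n < i`, and
`D_q^j (1/(t;q)_n) = (q^n;q)_j / (t;q)_(n+j)`. Collecting the `i`-th pieces over `n = m + i` gives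
the `i`-th series on the right, once the q-shifted factorials are split.

All series converge because `(x;q)_n` tends to `(x;q)_∞`, which is nonzero when no factor
vanishes: the terms are bounded multiples of `(c/(a b))^m`.
-/

open Filter Topology Finset Asymptotics

section

variable {q : ℂ}

@[simp]
lemma qPoch_zero (x : ℂ) : qPoch q x 0 = 1 := prod_range_zero _

lemma qPoch_succ (x : ℂ) (n : ℕ) : qPoch q x (n + 1) = qPoch q x n * (1 - x * q ^ n) :=
  prod_range_succ _ _

lemma qPoch_succ' (x : ℂ) (n : ℕ) : qPoch q x (n + 1) = (1 - x) * qPoch q (x * q) n := by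
  rw [qPoch, prod_range_succ', qPoch, pow_zero, mul_one, mul_comm]
  exact congrArg _ (prod_congr rfl fun j _ => by ring)

lemma qPoch_add (x : ℂ) (m n : ℕ) :
    qPoch q x (m + n) = qPoch q x m * qPoch q (x * q ^ m) n := by
  simp only [qPoch, prod_range_add, mul_assoc, pow_add]

lemma qPoch_ne_zero {x : ℂ} (hx : ∀ j, 1 - x * q ^ j ≠ 0) (n : ℕ) : qPoch q x n ≠ 0 :=
  prod_ne_zero_iff.2 fun j _ => hx j

lemma one_sub_mul_pow_ne_zero {x : ℂ} (hx : ‖x‖ < 1) (hq : ‖q‖ ≤ 1) (j : ℕ) :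
    1 - x * q ^ j ≠ 0 := by
  rw [sub_ne_zero]
  intro h
  have : ‖x * q ^ j‖ < 1 := by
    rw [norm_mul, norm_pow]
    exact mul_lt_one_of_nonneg_of_lt_one_left (norm_nonneg _) hx (pow_le_one₀ (norm_nonneg _) hq)
  simp [← h] at this

lemma one_sub_pow_mul_mul_pow_ne_zero {x : ℂ} (hx : ∀ j, 1 - x * q ^ j ≠ 0) (i j : ℕ) :
    1 - q ^ i * x * q ^ j ≠ 0 := by
  convert hx (i + j) using 2
  ring

lemma qBinom_zero_right (hq : ∀ n, qPoch q q n ≠ 0) (n : ℕ) : qBinom q n 0 = 1 := by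
  rw [qBinom, Nat.sub_zero, qPoch_zero, one_mul, div_self (hq n)]

lemma qBinom_self (hq : ∀ n, qPoch q q n ≠ 0) (n : ℕ) : qBinom q n n = 1 := by
  rw [qBinom, Nat.sub_self, qPoch_zero, mul_one, div_self (hq n)]

lemma qBinom_succ_succ (hq : ∀ n, qPoch q q n ≠ 0) {k j : ℕ} (hj : j + 1 ≤ k) :
    qBinom q (k + 1) (j + 1) = qBinom q k j + q ^ (j + 1) * qBinom q k (j + 1) := by
  obtain ⟨l, rfl⟩ := Nat.exists_eq_add_of_le hj
  have hsucc : ∀ n, qPoch q q (n + 1) = qPoch q q n * (1 - q ^ (n + 1)) := fun n => by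
    rw [qPoch, prod_range_succ, ← pow_succ']; rfl
  have hfac : ∀ n, 1 - q ^ (n + 1) ≠ 0 := fun n h => hq (n + 1) (by rw [hsucc, h, mul_zero])
  rw [qBinom, qBinom, qBinom, show j + 1 + l + 1 - (j + 1) = l + 1 by omega,
    show j + 1 + l - j = l + 1 by omega, show j + 1 + l - (j + 1) = l by omega,
    hsucc (j + 1 + l), hsucc j, hsucc l]
  rw [show j + 1 + l + 1 = (j + 1) + (l + 1) by omega, pow_add]
  field_simp [hq (j + 1 + l), hq j, hq l, hfac j, hfac l]
  ring

lemma sum_range_qBinom_succ (hq : ∀ n, qPoch q q n ≠ 0) (k : ℕ) (h : ℕ → ℂ) :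
    ∑ i ∈ range (k + 2), qBinom q (k + 1) i * h i =
      ∑ i ∈ range (k + 1), q ^ i * qBinom q k i * h i +
        ∑ i ∈ range (k + 1), qBinom q k i * h (i + 1) := by
  rw [sum_range_succ', sum_range_succ, sum_range_succ' (fun i => q ^ i * _ * _),
    sum_range_succ (fun i => qBinom q k i * h (i + 1)), qBinom_zero_right hq, qBinom_zero_right hq,
    qBinom_self hq, qBinom_self hq]
  have hmid : ∑ i ∈ range k, qBinom q (k + 1) (i + 1) * h (i + 1) =
      ∑ i ∈ range k, q ^ (i + 1) * qBinom q k (i + 1) * h (i + 1) +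
        ∑ i ∈ range k, qBinom q k i * h (i + 1) := by
    rw [← sum_add_distrib]
    exact sum_congr rfl fun i hi => by rw [qBinom_succ_succ hq (mem_range.1 hi)]; ring
  rw [hmid]
  ring

lemma sub_apply_mul_eq_mul_Dq (f : ℂ → ℂ) (s : ℂ) : f s - f (q * s) = s * Dq q f s := by
  rcases eq_or_ne s 0 with rfl | hs
  · simp
  · rw [Dq, mul_div_cancel₀ _ hs]

lemma iterate_Dq_succ_apply_zero (f : ℂ → ℂ) (k : ℕ) : (Dq q)^[k + 1] f 0 = 0 := by
  rw [Function.iterate_succ_apply', Dq, div_zero]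

lemma iterate_Dq_const_mul (C : ℂ) (f : ℂ → ℂ) (k : ℕ) (t : ℂ) :
    (Dq q)^[k] (fun s => C * f s) t = C * (Dq q)^[k] f t := by
  induction k generalizing t with
  | zero => rfl
  | succ k ih =>
    rw [Function.iterate_succ_apply', Function.iterate_succ_apply', Dq, Dq, ih, ih, ← mul_sub,
      mul_div_assoc]

theorem iterate_Dq_mul (hq : ∀ n, qPoch q q n ≠ 0) (f g : ℂ → ℂ) (k : ℕ) (t : ℂ) :
    (Dq q)^[k] (fun s => f s * g s) t =
      ∑ i ∈ range (k + 1), qBinom q k i * ((Dq q)^[i] f t * (Dq q)^[k - i] g (q ^ i * t)) := by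
  induction k generalizing t with
  | zero => simp [qBinom_zero_right hq]
  | succ k ih =>
    rcases eq_or_ne t 0 with rfl | ht
    · rw [iterate_Dq_succ_apply_zero]
      refine (sum_eq_zero fun i _ => ?_).symm
      rcases i with _ | i <;> simp [iterate_Dq_succ_apply_zero]
    rw [Function.iterate_succ_apply', Dq, ih, ih, div_eq_iff ht, sum_range_qBinom_succ hq,
      add_mul, sum_mul, sum_mul, ← sum_add_distrib, ← sum_sub_distrib]
    refine sum_congr rfl fun i hi => ?_
    have hik : k + 1 - i = k - i + 1 := by have := mem_range.1 hi; omega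
    have hf := sub_apply_mul_eq_mul_Dq (q := q) ((Dq q)^[i] f) t
    have hg := sub_apply_mul_eq_mul_Dq (q := q) ((Dq q)^[k - i] g) (q ^ i * t)
    rw [← Function.iterate_succ_apply' (Dq q)] at hf hg
    have hqi : ∀ s : ℂ, q ^ i * (q * s) = q ^ (i + 1) * s := fun s => by ring
    rw [hik, Nat.add_sub_add_right, hqi]
    rw [mul_left_comm, hqi] at hg
    linear_combination (qBinom q k i * (Dq q)^[i] f t) * hg +
      (qBinom q k i * (Dq q)^[k - i] g (q ^ (i + 1) * t)) * hf

lemma iterate_Dq_pow_add (hq : q ≠ 0) (i n : ℕ) {t : ℂ} (ht : t ≠ 0) :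
    (Dq q)^[i] (fun s => s ^ (n + i)) t = qPoch q (q ^ (n + 1)) i * t ^ n := by
  induction i generalizing n t with
  | zero => simp
  | succ i ih =>
    rw [Function.iterate_succ_apply', Dq, ← add_assoc, add_right_comm, ih (n + 1) ht,
      ih (n + 1) (mul_ne_zero hq ht), qPoch_succ', ← pow_succ, mul_pow, pow_succ t]
    field_simp

lemma iterate_Dq_pow_of_lt (hq : q ≠ 0) {n i : ℕ} (h : n < i) (t : ℂ) :
    (Dq q)^[i] (fun s => s ^ n) t = 0 := by
  have hconst : ∀ {u : ℂ}, u ≠ 0 → (Dq q)^[n] (fun s => s ^ n) u = qPoch q q n := fun hu => by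
    simpa using iterate_Dq_pow_add hq n 0 hu
  have hvanish : (Dq q)^[n + 1] (fun s => s ^ n) = 0 := by
    funext s
    rcases eq_or_ne s 0 with rfl | hs
    · exact iterate_Dq_succ_apply_zero _ _
    rw [Function.iterate_succ_apply', Dq, hconst hs, hconst (mul_ne_zero hq hs), sub_self,
      zero_div, Pi.zero_apply]
  obtain ⟨j, rfl⟩ := Nat.exists_eq_add_of_lt h
  rw [show n + j + 1 = j + (n + 1) by omega, Function.iterate_add_apply, hvanish]
  exact congrFun (Function.iterate_fixed (by funext s; simp [Dq]) j) t

lemma iterate_Dq_inv_qPoch (hq : q ≠ 0) (n i : ℕ) {t : ℂ} (ht : t ≠ 0)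
    (htq : ∀ j, 1 - t * q ^ j ≠ 0) :
    (Dq q)^[i] (fun s => (qPoch q s n)⁻¹) t = qPoch q (q ^ n) i / qPoch q t (n + i) := by
  induction i generalizing t with
  | zero => simp
  | succ i ih =>
    have hqt : ∀ j, 1 - q * t * q ^ j ≠ 0 := by
      simpa using one_sub_pow_mul_mul_pow_ne_zero htq 1
    rw [Function.iterate_succ_apply', Dq, ih ht htq, ih (mul_ne_zero hq ht) hqt, ← add_assoc,
      qPoch_succ, qPoch_succ, ← pow_add]
    have hrel := (qPoch_succ (q := q) t (n + i)).symm.trans (qPoch_succ' t (n + i))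
    rw [mul_comm q t] at hqt ⊢
    field_simp [qPoch_ne_zero htq (n + i), qPoch_ne_zero hqt (n + i), htq (n + i)]
    linear_combination (-qPoch q (q ^ n) i) * hrel

lemma summable_norm_mul_pow (hq : ‖q‖ < 1) (x : ℂ) : Summable fun j : ℕ => ‖x * q ^ j‖ := by
  simpa only [norm_mul, norm_pow] using
    (summable_geometric_of_lt_one (norm_nonneg q) hq).mul_left ‖x‖

lemma tendsto_qPoch (hq : ‖q‖ < 1) (x : ℂ) :
    Tendsto (qPoch q x) atTop (𝓝 (∏' j, (1 - x * q ^ j))) := by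
  simp_rw [sub_eq_add_neg]
  exact (multipliable_one_add_of_summable (f := fun j => -(x * q ^ j))
    (by simpa using summable_norm_mul_pow hq x)).tendsto_prod_tprod_nat

lemma tprod_one_sub_mul_pow_ne_zero (hq : ‖q‖ < 1) {x : ℂ} (hx : ∀ j, 1 - x * q ^ j ≠ 0) :
    ∏' j, (1 - x * q ^ j) ≠ 0 := by
  simp_rw [sub_eq_add_neg] at hx ⊢
  exact tprod_one_add_ne_zero_of_summable hx (by simpa using summable_norm_mul_pow hq x)

lemma tendsto_qPoch_pow (hq : ‖q‖ < 1) (n : ℕ) :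
    Tendsto (fun m => qPoch q (q ^ m) n) atTop (𝓝 1) := by
  have := tendsto_finsetProd (range n) fun j _ => (tendsto_const_nhds (x := (1 : ℂ))).sub
    ((tendsto_pow_atTop_nhds_zero_of_norm_lt_one hq).mul_const (q ^ j))
  simpa [qPoch] using this

lemma summable_mul_of_isBigO_pow {f g : ℕ → ℂ} {w L : ℂ} (hf : f =O[atTop] fun n => w ^ n)
    (hw : ‖w‖ < 1) (hg : Tendsto g atTop (𝓝 L)) : Summable fun n => f n * g n := by
  have hfg := hf.mul (hg.isBigO_one ℂ)
  simp only [mul_one] at hfg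
  exact summable_of_isBigO_nat (summable_geometric_of_norm_lt_one hw).norm hfg.norm_right

lemma summable_iterate_Dq {u : ℕ → ℂ → ℂ} (k : ℕ) {t : ℂ}
    (hu : ∀ j ≤ k, Summable fun n => u n (q ^ j * t)) :
    Summable fun n => (Dq q)^[k] (u n) t := by
  induction k generalizing t with
  | zero => simpa using hu 0 le_rfl
  | succ k ih =>
    have hqt : ∀ j ≤ k, Summable fun n => u n (q ^ j * (q * t)) := fun j hj => by
      simpa [pow_succ, mul_assoc] using hu (j + 1) (by omega)
    simp_rw [Function.iterate_succ_apply', Dq]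
    exact ((ih fun j hj => hu j (by omega)).sub (ih hqt)).div_const t

lemma iterate_Dq_tsum {u : ℕ → ℂ → ℂ} (k : ℕ) {t : ℂ}
    (hu : ∀ j ≤ k, Summable fun n => u n (q ^ j * t)) :
    (Dq q)^[k] (fun s => ∑' n, u n s) t = ∑' n, (Dq q)^[k] (u n) t := by
  induction k generalizing t with
  | zero => rfl
  | succ k ih =>
    have ht : ∀ j ≤ k, Summable fun n => u n (q ^ j * t) := fun j hj => hu j (by omega)
    have hqt : ∀ j ≤ k, Summable fun n => u n (q ^ j * (q * t)) := fun j hj => by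
      simpa [pow_succ, mul_assoc] using hu (j + 1) (by omega)
    simp_rw [Function.iterate_succ_apply', Dq]
    rw [ih ht, ih hqt, ← (summable_iterate_Dq k ht).tsum_sub (summable_iterate_Dq k hqt),
      tsum_div_const]

lemma iterate_Dq_pow_div_qPoch (hq0 : q ≠ 0) (hqq : ∀ n, qPoch q q n ≠ 0) {c : ℂ} (hc : c ≠ 0)
    (hcq : ∀ j, 1 - c * q ^ j ≠ 0) (k n : ℕ) :
    (Dq q)^[k] (fun t => t ^ n / qPoch q t n) c =
      ∑ i ∈ range (k + 1), qBinom q k i * ((Dq q)^[i] (fun s => s ^ n) c *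
        (qPoch q (q ^ n) (k - i) / qPoch q (q ^ i * c) (n + (k - i)))) := by
  simp only [div_eq_mul_inv]
  rw [iterate_Dq_mul hqq]
  refine sum_congr rfl fun i _ => ?_
  rw [iterate_Dq_inv_qPoch hq0 n (k - i) (mul_ne_zero (pow_ne_zero i hq0) hc)
    (one_sub_pow_mul_mul_pow_ne_zero hcq i), div_eq_mul_inv]

lemma summable_mul_pow_div_qPoch (hq : ‖q‖ < 1) {x ρ : ℂ} {A : ℕ → ℂ}
    (hx : ∀ j, 1 - x * q ^ j ≠ 0) (hA : A =O[atTop] fun n => ρ ^ n) (hρ : ‖ρ * x‖ < 1) :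
    Summable fun n => A n * (x ^ n / qPoch q x n) := by
  have hf : (fun n => A n * x ^ n) =O[atTop] fun n => (ρ * x) ^ n :=
    (hA.mul (isBigO_refl _ _)).congr_right fun n => (mul_pow _ _ _).symm
  have hg := (tendsto_qPoch hq x).inv₀ (tprod_one_sub_mul_pow_ne_zero hq hx)
  exact (summable_mul_of_isBigO_pow hf hρ hg).congr fun n => by rw [mul_assoc, div_eq_mul_inv]

lemma summable_shifted_mul_qPoch (hq : ‖q‖ < 1) {c ρ : ℂ} {A : ℕ → ℂ}
    (hcq : ∀ j, 1 - c * q ^ j ≠ 0) (hA : A =O[atTop] fun n => ρ ^ n) (hρ : ‖ρ * c‖ < 1)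
    (i k l : ℕ) :
    Summable fun m => A (m + i) * (qPoch q (q ^ (m + 1)) i * c ^ m) *
      (qPoch q (q ^ (m + i)) l / qPoch q (q ^ i * c) (m + k)) := by
  have hf : (fun m => A (m + i) * c ^ m) =O[atTop] fun m => ρ ^ i * (ρ * c) ^ m :=
    ((hA.comp_tendsto (tendsto_add_atTop_nat i)).mul (isBigO_refl (c ^ ·) _)).congr_right
      fun m => by simp only [Function.comp_apply]; ring
  have hg := ((tendsto_qPoch_pow hq i).comp (tendsto_add_atTop_nat 1)).mul
    (((tendsto_qPoch_pow hq l).comp (tendsto_add_atTop_nat i)).div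
      ((tendsto_qPoch hq (q ^ i * c)).comp (tendsto_add_atTop_nat k))
      (tprod_one_sub_mul_pow_ne_zero hq (one_sub_pow_mul_mul_pow_ne_zero hcq i)))
  refine (summable_mul_of_isBigO_pow (hf.trans (isBigO_const_mul_self _ _ _)) hρ hg).congr
    fun m => ?_
  simp only [Function.comp_apply, Pi.div_apply]
  ring

theorem iterate_Dq_tsum_mul_pow_div_qPoch (hq0 : q ≠ 0) (hq1 : ‖q‖ < 1) {c ρ : ℂ} {A : ℕ → ℂ}
    (hc : c ≠ 0) (hcq : ∀ j, 1 - c * q ^ j ≠ 0) (hA : A =O[atTop] fun n => ρ ^ n)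
    (hρ : ‖ρ * c‖ < 1) (k : ℕ) :
    (Dq q)^[k] (fun t => ∑' n, A n * (t ^ n / qPoch q t n)) c =
      ∑ i ∈ range (k + 1), qBinom q k i * ∑' m, A (m + i) * (qPoch q (q ^ (m + 1)) i * c ^ m) *
        (qPoch q (q ^ (m + i)) (k - i) / qPoch q (q ^ i * c) (m + k)) := by
  have hqq : ∀ n, qPoch q q n ≠ 0 := qPoch_ne_zero (one_sub_mul_pow_ne_zero hq1 hq1.le)
  set F : ℕ → ℕ → ℂ := fun i n => qBinom q k i * (A n * ((Dq q)^[i] (fun s => s ^ n) c *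
    (qPoch q (q ^ n) (k - i) / qPoch q (q ^ i * c) (n + (k - i))))) with hF
  have hterm : ∀ n, (Dq q)^[k] (fun t => A n * (t ^ n / qPoch q t n)) c =
      ∑ i ∈ range (k + 1), F i n := fun n => by
    rw [iterate_Dq_const_mul, iterate_Dq_pow_div_qPoch hq0 hqq hc hcq, mul_sum]
    exact sum_congr rfl fun i _ => mul_left_comm _ _ _
  have hF_shift : ∀ i ∈ range (k + 1), ∀ m, F i (m + i) = qBinom q k i *
      (A (m + i) * (qPoch q (q ^ (m + 1)) i * c ^ m) *
        (qPoch q (q ^ (m + i)) (k - i) / qPoch q (q ^ i * c) (m + k))) := by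
    intro i hi m
    simp only [hF]
    rw [iterate_Dq_pow_add hq0 i m hc, show m + i + (k - i) = m + k by
      have := mem_range.1 hi; omega]
    ring
  have hF_zero : ∀ i, ∀ n ∈ range i, F i n = 0 := fun i n hn => by
    simp only [hF]
    rw [iterate_Dq_pow_of_lt hq0 (mem_range.1 hn), zero_mul, mul_zero, mul_zero]
  have hF_summable : ∀ i ∈ range (k + 1), Summable (F i) := fun i hi =>
    (summable_nat_add_iff i).1 (((summable_shifted_mul_qPoch hq1 hcq hA hρ i k (k - i)).mul_left
      _).congr fun m => (hF_shift i hi m).symm)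
  have hseries : ∀ j ≤ k, Summable fun n => A n * ((q ^ j * c) ^ n / qPoch q (q ^ j * c) n) :=
    fun j _ => summable_mul_pow_div_qPoch hq1 (one_sub_pow_mul_mul_pow_ne_zero hcq j) hA <|
      calc ‖ρ * (q ^ j * c)‖ = ‖q‖ ^ j * ‖ρ * c‖ := by simp only [norm_mul, norm_pow]; ring
        _ ≤ ‖ρ * c‖ := mul_le_of_le_one_left (norm_nonneg _) (pow_le_one₀ (norm_nonneg _) hq1.le)
        _ < 1 := hρ
  rw [iterate_Dq_tsum (u := fun n t => A n * (t ^ n / qPoch q t n)) k hseries, tsum_congr hterm,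
    Summable.tsum_finsetSum hF_summable]
  refine sum_congr rfl fun i hi => ?_
  rw [← (hF_summable i hi).sum_add_tsum_nat_add i, sum_eq_zero (hF_zero i), zero_add,
    tsum_congr (hF_shift i hi), tsum_mul_left]

end

lemma qGauss_shifted_term {q a b c : ℂ} (hqq : ∀ n, qPoch q q n ≠ 0)
    (hcq : ∀ j, 1 - c * q ^ j ≠ 0) (i k m : ℕ) :
    qPoch q a (m + i) * qPoch q b (m + i) / qPoch q q (m + i) * (a * b)⁻¹ ^ (m + i) *
        (qPoch q (q ^ (m + 1)) i * c ^ m) *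
        (qPoch q (q ^ (m + i)) (k - i) / qPoch q (q ^ i * c) (m + k)) =
      1 / qPoch q c k * (qPoch q a i * qPoch q b i * qPoch q c i /
          ((a * b) ^ i * qPoch q (c * q ^ k) i)) *
        (qPoch q (a * q ^ i) m * qPoch q (b * q ^ i) m * qPoch q (q ^ (m + i)) (k - i) *
          (c / (a * b)) ^ m / (qPoch q (c * q ^ (k + i)) m * qPoch q q m)) := by
  have hqm : qPoch q q (m + i) = qPoch q q m * qPoch q (q ^ (m + 1)) i := by
    rw [qPoch_add, ← pow_succ']
  have hci : qPoch q c (i + (m + k)) = qPoch q c i * qPoch q (q ^ i * c) (m + k) := by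
    rw [qPoch_add, mul_comm c]
  have hck : qPoch q c (i + (m + k)) =
      qPoch q c k * (qPoch q (c * q ^ k) i * qPoch q (c * q ^ (k + i)) m) := by
    rw [show i + (m + k) = k + (i + m) by ring, qPoch_add, qPoch_add, mul_assoc c, ← pow_add]
  have hcq_i := qPoch_ne_zero hcq i
  have hshift : qPoch q (q ^ i * c) (m + k) =
      qPoch q c k * (qPoch q (c * q ^ k) i * qPoch q (c * q ^ (k + i)) m) / qPoch q c i :=
    eq_div_of_mul_eq hcq_i (by rw [mul_comm, ← hci, hck])
  have hN := qPoch_ne_zero hcq (i + (m + k))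
  rw [hck, mul_ne_zero_iff, mul_ne_zero_iff] at hN
  have hqm0 := hqq (m + i)
  rw [hqm, mul_ne_zero_iff] at hqm0
  obtain ⟨_, _, _⟩ := hN
  obtain ⟨_, _⟩ := hqm0
  rw [add_comm m i, qPoch_add a, qPoch_add b, add_comm i m, hqm, hshift]
  field_simp
  ring

theorem stmt14_general (q a b c : ℂ) (hq0 : 0 < ‖q‖) (hq1 : ‖q‖ < 1)
    (hc : c ≠ 0)
    (hcab : ‖c / (a * b)‖ < 1)
    (hcq : ∀ j : ℕ, 1 - c * q ^ j ≠ 0) (k : ℕ) :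
    (Dq q)^[k]
        (fun t => ∑' n : ℕ,
          qPoch q a n * qPoch q b n * t ^ n /
            (qPoch q q n * qPoch q t n * (a * b) ^ n)) c =
      1 / qPoch q c k *
        ∑ i ∈ Finset.range (k + 1),
          qBinom q k i *
            (qPoch q a i * qPoch q b i * qPoch q c i /
              ((a * b) ^ i * qPoch q (c * q ^ k) i)) *
            ∑' n : ℕ,
              qPoch q (a * q ^ i) n * qPoch q (b * q ^ i) n *
                qPoch q (q ^ (n + i)) (k - i) * (c / (a * b)) ^ n /
                (qPoch q (c * q ^ (k + i)) n * qPoch q q n) := by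
  have hqq_factor := one_sub_mul_pow_ne_zero hq1 hq1.le
  set A : ℕ → ℂ := fun n => qPoch q a n * qPoch q b n / qPoch q q n * (a * b)⁻¹ ^ n with hA_def
  have hA : A =O[atTop] fun n => (a * b)⁻¹ ^ n :=
    (((((tendsto_qPoch hq1 a).mul (tendsto_qPoch hq1 b)).div (tendsto_qPoch hq1 q)
      (tprod_one_sub_mul_pow_ne_zero hq1 hqq_factor)).isBigO_one ℂ).mul
      (isBigO_refl _ _)).congr_right fun n => one_mul _
  have hsummand : ∀ t : ℂ, ∀ n, qPoch q a n * qPoch q b n * t ^ n /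
      (qPoch q q n * qPoch q t n * (a * b) ^ n) = A n * (t ^ n / qPoch q t n) := fun t n => by
    simp only [hA_def]
    ring
  simp_rw [hsummand]
  rw [iterate_Dq_tsum_mul_pow_div_qPoch (norm_pos_iff.mp hq0) hq1 hc hcq hA
    (by rwa [inv_mul_eq_div]), mul_sum]
  refine sum_congr rfl fun i _ => ?_
  rw [← tsum_mul_left, ← tsum_mul_left, ← tsum_mul_left]
  refine tsum_congr fun m => ?_
  simp only [hA_def]
  rw [qGauss_shifted_term (qPoch_ne_zero hqq_factor) hcq]
  ring

theorem stmt14 (q a b c : ℂ) (hq0 : 0 < ‖q‖) (hq1 : ‖q‖ < 1)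
    (ha : a ≠ 0) (hb : b ≠ 0) (hc : c ≠ 0)
    (hcab : ‖c / (a * b)‖ < 1)
    (hcq : ∀ j : ℕ, 1 - c * q ^ j ≠ 0) (k : ℕ) :
    (Dq q)^[k]
        (fun t => ∑' n : ℕ,
          qPoch q a n * qPoch q b n * t ^ n /
            (qPoch q q n * qPoch q t n * (a * b) ^ n)) c =
      1 / qPoch q c k *
        ∑ i ∈ Finset.range (k + 1),
          qBinom q k i *
            (qPoch q a i * qPoch q b i * qPoch q c i /
              ((a * b) ^ i * qPoch q (c * q ^ k) i)) *
            ∑' n : ℕ,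
              qPoch q (a * q ^ i) n * qPoch q (b * q ^ i) n *
                qPoch q (q ^ (n + i)) (k - i) * (c / (a * b)) ^ n /
                (qPoch q (c * q ^ (k + i)) n * qPoch q q n) :=
  stmt14_general q a b c hq0 hq1 hc hcab hcq k
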